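/- arXiv:2002.11915 — 9 statements merged into one kernel-verified Lean document; each statement's English description precedes it below -/
import Mathlib

section
/- Let $\pi : B \to A$ be an integral ring homomorphism of commutative $\mathbb{Z}_{(p)}$-algebras such that the induced map $B[1/p] \to A[1/p]$ is an isomorphism and the reduction $B/pB \to A/pA$ is such that every element of $A/pA$ has some $p$-power in the image. Then for every $a \in A$ there exists $k > 0$ with $a^{p^k} \in \pi(B)$. -/
private lemma aux_binom {R : Type*} [CommRing R] {p : ℕ} (hp : p.Prime) (s t : R) (N : ℕ)
    (h : (p : R) ^ (N + 1) ∣ t) : (p : R) ^ (N + 2) ∣ (s + t) ^ p - s ^ p := by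
  rw [add_pow, Finset.sum_range_succ]
  simp only [Nat.choose_self, Nat.cast_one, mul_one, Nat.sub_self, pow_zero]
  rw [add_sub_cancel_right]
  apply Finset.dvd_sum
  intro k hk
  rw [Finset.mem_range] at hk
  rcases Nat.eq_zero_or_pos k with rfl | hk0
  · have h1 : (p : R) ^ ((N + 1) * p) ∣ t ^ p := by
      rw [pow_mul]
      exact pow_dvd_pow_of_dvd h p
    have h2 : (p : R) ^ (N + 2) ∣ (p : R) ^ ((N + 1) * p) :=
      pow_dvd_pow _ (by nlinarith [hp.two_le])
    simpa using Dvd.dvd.mul_right ((h2.trans h1)) ((p.choose 0 : R))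
  · have hchoose : (p : R) ∣ (p.choose k : R) := by
      exact_mod_cast Nat.cast_dvd_cast (Nat.Prime.dvd_choose_self hp hk0.ne' hk)
    have htk : (p : R) ^ (N + 1) ∣ t ^ (p - k) :=
      h.trans (dvd_pow_self t (Nat.sub_ne_zero_of_lt hk))
    have : (p : R) ^ (N + 2) ∣ t ^ (p - k) * (p.choose k : R) := by
      rw [pow_succ]
      exact mul_dvd_mul htk hchoose
    calc (p:R)^(N+2) ∣ t ^ (p - k) * (p.choose k : R) := this
      _ ∣ s ^ k * t ^ (p - k) * (p.choose k : R) := by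
          rw [mul_assoc]; exact Dvd.dvd.mul_left dvd_rfl _

private lemma aux_iter {R : Type*} [CommRing R] {p : ℕ} (hp : p.Prime) (u v : R) (N : ℕ) :
    ∃ f : R, (u + (p : R) * v) ^ p ^ N = u ^ p ^ N + (p : R) ^ (N + 1) * f := by
  induction N with
  | zero => exact ⟨v, by simp⟩
  | succ N ih =>
    obtain ⟨f, hf⟩ := ih
    have hd : (p : R) ^ (N + 1) ∣ (p : R) ^ (N + 1) * f := Dvd.intro f rfl
    obtain ⟨g, hg⟩ := aux_binom hp (u ^ p ^ N) ((p : R) ^ (N + 1) * f) N hd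
    refine ⟨g, ?_⟩
    have : (u + (p : R) * v) ^ p ^ (N + 1) = ((u + (p : R) * v) ^ p ^ N) ^ p := by
      rw [← pow_mul, pow_succ]
    rw [this, hf]
    have hup : (u ^ p ^ N) ^ p = u ^ p ^ (N + 1) := by rw [← pow_mul, pow_succ]
    linear_combination hg + (1 : R) * hup.symm - hup



/-- Let `π : B → A` be an integral ring homomorphism of commutative `ℤ_(p)`-algebras
(every prime `q ≠ p` is invertible in `A` and `B`) such that the induced map
`B[1/p] → A[1/p]` is an isomorphism and such that every element of `A/pA` has some
`p`-th power in the image of `B/pB`. Then for every `a ∈ A` there exists `k > 0`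
with `a ^ p ^ k ∈ π(B)`. -/
theorem stmt_3 {A B : Type*} [CommRing A] [CommRing B] (p : ℕ) (hp : p.Prime)
    (hZpA : ∀ q : ℕ, q.Prime → q ≠ p → IsUnit (q : A))
    (hZpB : ∀ q : ℕ, q.Prime → q ≠ p → IsUnit (q : B))
    (π : B →+* A) (hint : π.IsIntegral)
    (hloc : Function.Bijective
      (IsLocalization.map (M := Submonoid.powers ((p : B)))
        (T := Submonoid.powers ((p : A)))
        (S := Localization.Away ((p : B))) (Localization.Away ((p : A))) π
        (by
          intro x hx
          obtain ⟨n, rfl⟩ := hx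
          exact Submonoid.mem_comap.mpr ⟨n, by simp⟩)))
    (hmodp : ∀ a : A ⧸ Ideal.span {(p : A)}, ∃ (l : ℕ) (b : B ⧸ Ideal.span {(p : B)}),
      a ^ p ^ l = Ideal.quotientMap (Ideal.span {(p : A)}) π
        (by
          rw [Ideal.span_le, Set.singleton_subset_iff]
          exact Ideal.mem_comap.mpr (by simp [Ideal.mem_span_singleton])) b) :
    ∀ a : A, ∃ k : ℕ, 0 < k ∧ a ^ p ^ k ∈ π.range := by
  -- Step 1: every element of A, multiplied by a power of p, is in the range of π.
  have step1 : ∀ x : A, ∃ (n : ℕ) (b : B), (p : A) ^ n * x = π b := by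
    intro x
    obtain ⟨z, hz⟩ := hloc.2 (algebraMap A (Localization.Away ((p : A))) x)
    obtain ⟨⟨b, s⟩, hbs⟩ := IsLocalization.surj (Submonoid.powers ((p : B))) z
    obtain ⟨n, hn⟩ := s.2
    have hmap := congrArg (IsLocalization.map (M := Submonoid.powers ((p : B)))
        (T := Submonoid.powers ((p : A)))
        (S := Localization.Away ((p : B))) (Localization.Away ((p : A))) π
        (by
          intro x hx
          obtain ⟨n, rfl⟩ := hx
          exact Submonoid.mem_comap.mpr ⟨n, by simp⟩)) hbs
    rw [map_mul, hz, IsLocalization.map_eq, IsLocalization.map_eq] at hmap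
    rw [← map_mul] at hmap
    obtain ⟨c, hc⟩ := (IsLocalization.eq_iff_exists (Submonoid.powers ((p : A)))
      (Localization.Away ((p : A)))).mp hmap
    obtain ⟨m, hm⟩ := c.2
    refine ⟨m + n, (p : B) ^ m * b, ?_⟩
    have hs : π (s : B) = (p : A) ^ n := by
      rw [← hn]; rw [map_pow, map_natCast]
    have h2 : (c : A) * (x * π (s : B)) = (c : A) * π b := hc
    rw [hs, ← hm] at h2
    simp only [] at h2
    rw [map_mul, map_pow, map_natCast]
    rw [pow_add]
    linear_combination h2
  intro a
  -- Step 2: write a ^ p ^ l = π b + p * e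
  obtain ⟨l, b0, hb0⟩ := hmodp (Ideal.Quotient.mk _ a)
  obtain ⟨b, rfl⟩ := Ideal.Quotient.mk_surjective b0
  rw [Ideal.quotientMap_mk, ← map_pow] at hb0
  have hsub : Ideal.Quotient.mk (Ideal.span {(p : A)}) (a ^ p ^ l - π b) = 0 := by
    rw [map_sub, hb0, sub_self]
  rw [Ideal.Quotient.eq_zero_iff_mem, Ideal.mem_span_singleton] at hsub
  obtain ⟨e, he⟩ := hsub
  have he' : a ^ p ^ l = π b + (p : A) * e := by linear_combination he
  -- Set up the B-algebra structure on A via π; T = B[e] is a finite B-module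
  letI : Algebra B A := π.toAlgebra
  have halg : algebraMap B A = π := rfl
  have hinte : IsIntegral B e := hint e
  obtain ⟨s, hs⟩ := hinte.fg_adjoin_singleton
  choose n bb hnb using step1
  set M : ℕ := Finset.sup s n with hM
  -- p^M multiplies everything in T into the range of π
  have hmem : ∀ x ∈ Subalgebra.toSubmodule (Algebra.adjoin B ({e} : Set A)),
      (p : A) ^ M * x ∈ π.range := by
    rw [← hs]
    intro x hx
    induction hx using Submodule.span_induction with
    | mem x hxs =>
      refine ⟨(p : B) ^ (M - n x) * bb x, ?_⟩
      have hle : n x ≤ M := Finset.le_sup hxs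
      rw [map_mul, map_pow, map_natCast, ← hnb x, ← mul_assoc, ← pow_add]
      congr 2
      omega
    | zero => exact ⟨0, by simp⟩
    | add x y hx hy ihx ihy =>
      obtain ⟨cx, hcx⟩ := ihx
      obtain ⟨cy, hcy⟩ := ihy
      exact ⟨cx + cy, by rw [map_add, hcx, hcy, mul_add]⟩
    | smul r x hx ihx =>
      obtain ⟨cx, hcx⟩ := ihx
      refine ⟨r * cx, ?_⟩
      rw [map_mul, hcx, Algebra.smul_def, halg]
      ring
  -- the iteration inside T
  set T := Algebra.adjoin B ({e} : Set A) with hT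
  have hbT : π b ∈ T := halg ▸ Subalgebra.algebraMap_mem T b
  have heT : e ∈ T := Algebra.self_mem_adjoin_singleton B e
  obtain ⟨f, hf⟩ := aux_iter (R := T) hp ⟨π b, hbT⟩ ⟨e, heT⟩ M
  -- push the identity down to A
  have hfA : (π b + (p : A) * e) ^ p ^ M = (π b) ^ p ^ M + (p : A) ^ (M + 1) * (f : A) := by
    have hcast := congrArg (Subtype.val) hf
    push_cast at hcast
    convert hcast using 2 <;> push_cast <;> ring
  refine ⟨l + M + 1, by omega, ?_⟩
  have hpow : a ^ p ^ (l + M + 1) = (((a ^ p ^ l) ^ p ^ M) ^ p) := by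
    rw [← pow_mul, ← pow_mul]
    congr 1
    ring
  rw [hpow, he', hfA]
  have h1 : (π b) ^ p ^ M ∈ π.range := ⟨b ^ p ^ M, map_pow π b _⟩
  have h2 : (p : A) ^ (M + 1) * (f : A) ∈ π.range := by
    have := hmem (f : A) f.2
    obtain ⟨c, hc⟩ := this
    exact ⟨(p : B) * c, by rw [map_mul, map_natCast, hc, pow_succ]; ring⟩
  obtain ⟨c1, hc1⟩ := h1
  obtain ⟨c2, hc2⟩ := h2
  exact ⟨(c1 + c2) ^ p, by rw [map_pow, map_add, hc1, hc2]⟩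
end

section
/- Let $\pi : B \to A$ be a ring homomorphism of commutative $\mathbb{Z}_{(p)}$-algebras, and let $b, b' \in B$ with $\pi(b) = \pi(b')$. Suppose $s := b - b'$ satisfies $p^n s = 0$ for some $n > 0$ and $s^{p^k} \in pB$ for some $k > 0$. Then there exists $m > 0$ such that $b^{p^m} = (b')^{p^m}$. -/
/-!
Since `s ^ p ^ k = p * t` and `p ^ n` kills `s`, the element `s` is nilpotent: `s ^ N = 0` with
`N = n * p ^ k + 1`. Expanding `b ^ p ^ m = (b' + s) ^ p ^ m`, the term with `s ^ i`, `0 < i`,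
vanishes either because `i ≥ N`, or because `i < N` and Kummer's theorem gives
`p ^ (m - i) ∣ (p ^ m).choose i`, a multiple of `p ^ n` once `m ≥ n + N`.
-/

theorem Nat.pow_sub_dvd_choose_prime_pow {p m i : ℕ} (hp : p.Prime) (hi : i ≠ 0) :
    p ^ (m - i) ∣ (p ^ m).choose i := by
  rcases le_or_gt i (p ^ m) with him | him
  · have hchoose : (p ^ m).choose i ≠ 0 := (Nat.choose_pos him).ne'
    rw [hp.pow_dvd_iff_le_factorization hchoose, Nat.factorization_choose_prime_pow hp him hi]
    exact Nat.sub_le_sub_left (Nat.factorization_lt p hi).le m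
  · rw [Nat.choose_eq_zero_of_lt him]
    exact dvd_zero _

section CommRing

variable {R : Type*} [CommRing R]

theorem pow_mul_add_one_eq_zero_of_pow_eq_mul {a s t : R} {n q : ℕ} (hns : a ^ n * s = 0)
    (hst : s ^ q = a * t) : s ^ (n * q + 1) = 0 := by
  calc s ^ (n * q + 1) = t ^ n * (a ^ n * s) := by rw [pow_succ, pow_mul', hst]; ring
    _ = 0 := by rw [hns, mul_zero]

theorem add_pow_eq_pow_of_choose_mul_pow_eq_zero {x s : R} {e : ℕ}
    (h : ∀ i, i ≠ 0 → (e.choose i : R) * s ^ i = 0) : (x + s) ^ e = x ^ e := by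
  rw [add_comm, add_pow, Finset.sum_range_succ', Finset.sum_eq_zero]
  · simp
  · intro i _
    linear_combination x ^ (e - (i + 1)) * h (i + 1) i.succ_ne_zero

theorem choose_prime_pow_mul_pow_eq_zero {p n N : ℕ} (hp : p.Prime) {s : R}
    (hns : (p : R) ^ n * s = 0) (hsN : s ^ N = 0) {i : ℕ} (hi : i ≠ 0) :
    ((p ^ (n + N)).choose i : R) * s ^ i = 0 := by
  rcases le_or_gt N i with hNi | hiN
  · rw [← Nat.sub_add_cancel hNi, pow_add s, hsN, mul_zero, mul_zero]
  · obtain ⟨c, hc⟩ := (pow_dvd_pow p (by omega : n ≤ n + N - i)).trans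
      (Nat.pow_sub_dvd_choose_prime_pow hp hi)
    obtain ⟨j, rfl⟩ := Nat.exists_eq_succ_of_ne_zero hi
    calc ((p ^ (n + N)).choose (j + 1) : R) * s ^ (j + 1)
        = c * s ^ j * ((p : R) ^ n * s) := by rw [hc]; push_cast; ring
      _ = 0 := by rw [hns, mul_zero]

theorem add_pow_prime_pow_eq_pow {p n N : ℕ} (hp : p.Prime) {x s : R}
    (hns : (p : R) ^ n * s = 0) (hsN : s ^ N = 0) :
    (x + s) ^ p ^ (n + N) = x ^ p ^ (n + N) :=
  add_pow_eq_pow_of_choose_mul_pow_eq_zero fun _ hi =>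
    choose_prime_pow_mul_pow_eq_zero hp hns hsN hi

end CommRing

theorem stmt_4_general {B : Type*} [CommRing B] (p : ℕ) (hp : p.Prime)
    (b b' : B)
    (s : B) (hs : s = b - b')
    (n : ℕ) (hns : (p : B) ^ n * s = 0)
    (k : ℕ) (t : B) (hst : s ^ p ^ k = (p : B) * t) :
    ∃ m : ℕ, 0 < m ∧ b ^ p ^ m = b' ^ p ^ m := by
  have hsN := pow_mul_add_one_eq_zero_of_pow_eq_mul hns hst
  refine ⟨n + (n * p ^ k + 1), by omega, ?_⟩
  rw [show b = b' + s by rw [hs]; ring]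
  exact add_pow_prime_pow_eq_pow hp hns hsN

/-- Let `π : B → A` be a ring homomorphism of commutative `ℤ_(p)`-algebras, and let
`b, b' ∈ B` with `π b = π b'`. Suppose `s := b - b'` satisfies `p ^ n * s = 0` for some
`n > 0` and `s ^ p ^ k = p * t` for some `k > 0` and `t ∈ B`. Then there exists `m > 0`
such that `b ^ p ^ m = b' ^ p ^ m`. -/
theorem stmt_4 {A B : Type*} [CommRing A] [CommRing B] (p : ℕ) (hp : p.Prime)
    (hZpA : ∀ q : ℕ, q.Prime → q ≠ p → IsUnit (q : A))
    (hZpB : ∀ q : ℕ, q.Prime → q ≠ p → IsUnit (q : B))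
    (π : B →+* A) (b b' : B) (hbb : π b = π b')
    (s : B) (hs : s = b - b')
    (n : ℕ) (hn : 0 < n) (hns : (p : B) ^ n * s = 0)
    (k : ℕ) (hk : 0 < k) (t : B) (hst : s ^ p ^ k = (p : B) * t) :
    ∃ m : ℕ, 0 < m ∧ b ^ p ^ m = b' ^ p ^ m :=
  stmt_4_general p hp b b' s hs n hns k t hst
end

section
/- Let $A \subseteq B$ be commutative $\mathbb{Z}_{(p)}$-algebras with $A$ $p$-saturated in $B$, and let $f \in B$ with $f^2, f^3 \in A$ and $f^2 B \subseteq A$. Suppose $b \in B$ is such that $p^k b = a_1 + a_2 f$ for some $k > 0$ and $a_1, a_2 \in A$. Then there exist $a \in A$ and $b' \in B$ with $b^{p^k} = a + b' f$. -/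
/-- Let `A ⊆ B` be commutative `ℤ_(p)`-algebras with `A` `p`-saturated in `B`, and let
`f ∈ B` with `f ^ 2, f ^ 3 ∈ A` and `f ^ 2 * B ⊆ A`. Suppose `b ∈ B` is such that
`p ^ k * b = a₁ + a₂ * f` for some `k > 0` and `a₁, a₂ ∈ A`. Then there exist `a ∈ A`
and `b' ∈ B` with `b ^ p ^ k = a + b' * f`. -/
theorem stmt_8 {B : Type*} [CommRing B] (p : ℕ) (hp : p.Prime)
    (hZpB : ∀ q : ℕ, q.Prime → q ≠ p → IsUnit (q : B))
    (A : Subring B)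
    (hsat : ∀ (x : B) (l : ℕ), 0 < l → (p : B) ^ l * x ∈ A → x ∈ A)
    (f : B) (hf2 : f ^ 2 ∈ A) (hf3 : f ^ 3 ∈ A) (hf2B : ∀ x : B, f ^ 2 * x ∈ A)
    (b : B) (k : ℕ) (hk : 0 < k) (a₁ a₂ : B) (ha₁ : a₁ ∈ A) (ha₂ : a₂ ∈ A)
    (hb : (p : B) ^ k * b = a₁ + a₂ * f) :
    ∃ a ∈ A, ∃ b' : B, b ^ p ^ k = a + b' * f := by
  obtain ⟨m, hm⟩ : ∃ m, p ^ k = m + 1 :=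
    ⟨p ^ k - 1, (Nat.succ_pred_eq_of_pos (pow_pos hp.pos k)).symm⟩
  have L1 : ∀ n : ℕ, ∃ s : B, (a₁ + a₂ * f) ^ (n + 1)
      = a₁ ^ (n + 1) + ((n + 1 : ℕ) : B) * a₁ ^ n * a₂ * f + f ^ 2 * s := by
    intro n
    induction n with
    | zero => exact ⟨0, by push_cast; ring⟩
    | succ n ih =>
      obtain ⟨s, hs⟩ := ih
      refine ⟨((n + 1 : ℕ) : B) * a₁ ^ n * a₂ ^ 2 + s * (a₁ + a₂ * f), ?_⟩
      rw [pow_succ, hs]; push_cast; ring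
  have L2 : ∀ n : ℕ, ∃ t : B, f * (a₁ + a₂ * f) ^ n = a₁ ^ n * f + f ^ 2 * t := by
    intro n
    induction n with
    | zero => exact ⟨0, by ring⟩
    | succ n ih =>
      obtain ⟨t, ht⟩ := ih
      refine ⟨a₁ ^ n * a₂ + t * (a₁ + a₂ * f), ?_⟩
      rw [pow_succ, ← mul_assoc, ht]; ring
  obtain ⟨s, hs⟩ := L1 m
  obtain ⟨t, ht⟩ := L2 m
  have key : (p : B) ^ (k * (m + 1)) * (b ^ m * (b - a₂ * f))
      = a₁ ^ (m + 1) + f ^ 2 * (s - (p : B) ^ k * a₂ * t) := by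
    have h1 : (p : B) ^ (k * (m + 1)) * (b ^ m * (b - a₂ * f))
        = ((p : B) ^ k * b) ^ m * (((p : B) ^ k * b) - (p : B) ^ k * (a₂ * f)) := by
      rw [mul_pow, ← pow_mul]; ring
    rw [h1, hb]
    have h2 : (a₁ + a₂ * f) ^ m * ((a₁ + a₂ * f) - (p : B) ^ k * (a₂ * f))
        = (a₁ + a₂ * f) ^ (m + 1) - (p : B) ^ k * a₂ * (f * (a₁ + a₂ * f) ^ m) := by
      ring
    rw [h2, hs, ht]
    have hcast : ((m + 1 : ℕ) : B) = (p : B) ^ k := by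
      rw [← hm]; push_cast; ring
    rw [hcast]; ring
  have hxA : b ^ m * (b - a₂ * f) ∈ A := by
    apply hsat _ (k * (m + 1)) (Nat.mul_pos hk (Nat.succ_pos m))
    rw [key]
    exact A.add_mem (A.pow_mem ha₁ _) (hf2B _)
  refine ⟨b ^ m * (b - a₂ * f), hxA, b ^ m * a₂, ?_⟩
  rw [hm, pow_succ]; ring
end

section
/- Let $f : X \to Z$ be a universal homeomorphism of schemes factoring as $X \xrightarrow{g} Y \xrightarrow{h} Z$ where $g$ is dominant and $h$ is separated. Then both $g$ and $h$ are universal homeomorphisms. -/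
/-!
A universal homeomorphism is the same as a universally closed, universally injective, surjective
morphism. Universal injectivity passes from `g ≫ h` to `g` for arbitrary `h`, and universal
closedness does once `h` is separated. Being closed with dense image, `g` is then surjective,
and surjectivity of `g` lets surjectivity, universal closedness and universal injectivity pass
from `g ≫ h` to `h`.
-/

open AlgebraicGeometry CategoryTheory

/-- A morphism of schemes is a universal homeomorphism if every base change of it is a
homeomorphism on underlying topological spaces. -/
def IsUniversalHomeomorphism : MorphismProperty Scheme :=
  MorphismProperty.universally (topologically @IsHomeomorph)

namespace AlgebraicGeometry

open MorphismProperty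

lemma isUniversalHomeomorphism_iff {X Y : Scheme} (f : X ⟶ Y) :
    IsUniversalHomeomorphism f ↔ UniversallyClosed f ∧ UniversallyInjective f ∧ Surjective f := by
  refine ⟨fun hf ↦ ⟨⟨fun _ _ _ _ _ H ↦ (hf _ _ _ H).isClosedMap⟩,
    ⟨fun _ _ _ _ _ H ↦ (hf _ _ _ H).injective⟩, ⟨(hf _ _ _ .of_id_snd).surjective⟩⟩, ?_⟩
  rintro ⟨hc, hi, hs⟩ X' Y' i₁ i₂ f' H
  have : Surjective f' := of_isPullback H.flip hs
  exact isHomeomorph_iff_continuous_isClosedMap_bijective.mpr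
    ⟨f'.continuous, hc.universally_isClosedMap _ _ _ H, hi.universally_injective _ _ _ H,
      f'.surjective⟩

-- Diagonals are monomorphisms, hence universally injective.
instance universallyInjective_hasOfPostcompProperty_top :
    HasOfPostcompProperty @UniversallyInjective ⊤ :=
  hasOfPostcompProperty_iff_le_diagonal.mpr fun _ _ _ _ ↦ inferInstanceAs (UniversallyInjective _)

lemma UniversallyInjective.of_comp {X Y Z : Scheme} (f : X ⟶ Y) (g : Y ⟶ Z)
    [UniversallyInjective (f ≫ g)] : UniversallyInjective f :=
  of_postcomp _ (W' := ⊤) f g trivial ‹_›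

lemma UniversallyInjective.of_comp_surjective {X Y Z : Scheme} (f : X ⟶ Y) (g : Y ⟶ Z)
    [UniversallyInjective (f ≫ g)] [Surjective f] : UniversallyInjective g := by
  constructor
  intro X' Y' i₁ i₂ g' H
  have hinj := UniversallyInjective.universally_injective _ _ _
    ((IsPullback.of_hasPullback i₁ f).paste_horiz H)
  have : Surjective (Limits.pullback.fst i₁ f) :=
    of_isPullback (IsPullback.of_hasPullback i₁ f).flip ‹_›
  exact Function.Injective.of_comp_right hinj (Limits.pullback.fst i₁ f).surjective

end AlgebraicGeometry

/-- If `f = h ∘ g` is a universal homeomorphism of schemes, `g` is dominant and `h` is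
separated, then both `g` and `h` are universal homeomorphisms. -/
theorem stmt_10 {X Y Z : Scheme} (g : X ⟶ Y) (h : Y ⟶ Z)
    (hf : IsUniversalHomeomorphism (g ≫ h))
    (hg : Dense (Set.range g.base))
    (hh : IsSeparated h) :
    IsUniversalHomeomorphism g ∧ IsUniversalHomeomorphism h := by
  obtain ⟨_, _, _⟩ := (isUniversalHomeomorphism_iff _).mp hf
  have : IsDominant g := ⟨hg⟩
  have : UniversallyClosed g := .of_comp_of_isSeparated g h
  have : UniversallyInjective g := .of_comp g h
  have : Surjective h := .of_comp g h
  have : UniversallyClosed h := .of_comp_surjective g h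
  have : UniversallyInjective h := .of_comp_surjective g h
  exact ⟨(isUniversalHomeomorphism_iff g).mpr ⟨‹_›, ‹_›, inferInstance⟩,
    (isUniversalHomeomorphism_iff h).mpr ⟨‹_›, ‹_›, ‹_›⟩⟩
end

section
/- An affine morphism of schemes $f : Y \to X$ is a universal homeomorphism if and only if for every prime number $p$, the base change $f_{\mathbb{Z}_{(p)}} : Y \times_{\operatorname{Spec}\mathbb{Z}} \operatorname{Spec}\mathbb{Z}_{(p)} \to X \times_{\operatorname{Spec}\mathbb{Z}} \operatorname{Spec}\mathbb{Z}_{(p)}$ is a universal homeomorphism. -/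
open AlgebraicGeometry CategoryTheory CategoryTheory.Limits

/-!
The morphisms `Spec ℤ_(p) ⟶ Spec ℤ` are preimmersions whose images `{q | q ⊆ (p)}` are
stable under generization and together cover `Spec ℤ`. If the base change of `f` to such a
preimmersion is a homeomorphism, then `f` is bijective over its image and lifts every
specialization ending in it; so if all the base changes `f_(p)` are homeomorphisms, `f` is
bijective and specializing. Base change to `ℤ_(p)` commutes with any other base change, so the
same holds universally when the `f_(p)` are universal homeomorphisms. Universally specializing
and quasi-compact (as `f` is affine) means universally closed, and a continuous closed
bijection is a homeomorphism.
-/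

open Topology

section Topology

variable {X Y X' Y' : Type*} {f : Y → X} {f' : Y' → X'} {g : Y' → Y} {h : X' → X}

lemma bijOn_preimage_range_of_comp_eq (hcomm : ∀ t, f (g t) = h (f' t))
    (hrange : Set.range g = f ⁻¹' Set.range h) (hh : Function.Injective h)
    (hf' : Function.Bijective f') :
    Set.BijOn f (f ⁻¹' Set.range h) (Set.range h) := by
  refine ⟨fun _ hy ↦ hy, ?_, ?_⟩
  · rintro y₁ hy₁ y₂ hy₂ hy
    obtain ⟨t₁, rfl⟩ : y₁ ∈ Set.range g := hrange ▸ hy₁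
    obtain ⟨t₂, rfl⟩ : y₂ ∈ Set.range g := hrange ▸ hy₂
    rw [hcomm, hcomm] at hy
    rw [hf'.injective (hh hy)]
  · rintro _ ⟨x', rfl⟩
    obtain ⟨t, rfl⟩ := hf'.surjective x'
    exact ⟨g t, ⟨_, (hcomm t).symm⟩, hcomm t⟩

variable [TopologicalSpace X] [TopologicalSpace Y] [TopologicalSpace X'] [TopologicalSpace Y']

lemma exists_specializes_of_comp_eq (hcomm : ∀ t, f (g t) = h (f' t))
    (hrange : Set.range g = f ⁻¹' Set.range h) (hg : Continuous g) (hh : IsInducing h)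
    (hf' : IsHomeomorph f') (hgen : StableUnderGeneralization (Set.range h))
    {y : Y} {x : X} (hyx : f y ⤳ x) (hx : x ∈ Set.range h) :
    ∃ y', y ⤳ y' ∧ f y' = x := by
  obtain ⟨t, rfl⟩ : y ∈ Set.range g := hrange ▸ hgen hyx hx
  obtain ⟨s, rfl⟩ : x ∈ Set.range (h ∘ f') := by rwa [hf'.surjective.range_comp]
  rw [hcomm] at hyx
  have hts : t ⤳ s := hf'.isInducing.specializes_iff.mp (hh.specializes_iff.mp hyx)
  exact ⟨g s, hts.map hg, hcomm s⟩

end Topology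

section BaseChange

variable {S X Y T : Scheme} {πY : Y ⟶ S} {πX : X ⟶ S} (f : Y ⟶ X) (hf : f ≫ πX = πY)
  (u : T ⟶ S)

noncomputable def baseChangeOver : pullback πY u ⟶ pullback πX u :=
  pullback.map πY u πX u f (𝟙 _) (𝟙 _) (by simp [hf]) (by simp)

lemma baseChangeOver_fst :
    baseChangeOver f hf u ≫ pullback.fst πX u = pullback.fst πY u ≫ f :=
  pullback.lift_fst _ _ _

lemma baseChangeOver_snd : baseChangeOver f hf u ≫ pullback.snd πX u = pullback.snd πY u :=
  (pullback.lift_snd _ _ _).trans (Category.comp_id _)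

lemma isPullback_baseChangeOver :
    IsPullback (baseChangeOver f hf u) (pullback.fst πY u) (pullback.fst πX u) f := by
  refine .of_right ?_ (baseChangeOver_fst f hf u) (IsPullback.of_hasPullback πX u).flip
  rw [baseChangeOver_snd, hf]
  exact (IsPullback.of_hasPullback πY u).flip

lemma isPullback_baseChangeOver_of_isPullback {X' Y' : Scheme} {f' : Y' ⟶ X'} {i₁ : Y' ⟶ Y}
    {i₂ : X' ⟶ X} (sq : IsPullback f' i₁ i₂ f) (hf' : f' ≫ i₂ ≫ πX = i₁ ≫ πY) :
    IsPullback (baseChangeOver f' hf' u) (baseChangeOver i₁ rfl u) (baseChangeOver i₂ rfl u)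
      (baseChangeOver f hf u) := by
  refine .of_bot ?_ ?_ (isPullback_baseChangeOver f hf u)
  · rw [baseChangeOver_fst, baseChangeOver_fst]
    exact (isPullback_baseChangeOver f' hf' u).paste_vert sq
  · apply pullback.hom_ext <;>
      simp [baseChangeOver, pullback.map, pullback.lift_fst_assoc, pullback.lift_fst,
        pullback.lift_snd, sq.w]

lemma range_fst_eq_preimage_range_fst (hf : f ≫ πX = πY) :
    Set.range (pullback.fst πY u).base = f.base ⁻¹' Set.range (pullback.fst πX u).base := by
  simp only [Scheme.Pullback.range_fst, ← hf, Scheme.Hom.comp_base, TopCat.coe_comp,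
    Set.preimage_comp]

lemma baseChangeOver_fst_apply (t : ↥(pullback πY u)) :
    (pullback.fst πX u).base ((baseChangeOver f hf u).base t) =
      f.base ((pullback.fst πY u).base t) := by
  rw [← Scheme.Hom.comp_apply, baseChangeOver_fst, Scheme.Hom.comp_apply]

lemma bijOn_range_fst_of_isHomeomorph_baseChangeOver [IsPreimmersion u]
    (H : IsHomeomorph (baseChangeOver f hf u).base) :
    Set.BijOn f.base (f.base ⁻¹' Set.range (pullback.fst πX u).base)
      (Set.range (pullback.fst πX u).base) :=
  bijOn_preimage_range_of_comp_eq (fun t ↦ (baseChangeOver_fst_apply f hf u t).symm)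
    (range_fst_eq_preimage_range_fst f u hf) (pullback.fst πX u).isEmbedding.injective
    H.bijective

lemma exists_specializes_of_isHomeomorph_baseChangeOver [IsPreimmersion u]
    (H : IsHomeomorph (baseChangeOver f hf u).base)
    (hgen : StableUnderGeneralization (Set.range u.base)) {y : Y} {x : X} (hyx : f.base y ⤳ x)
    (hx : x ∈ Set.range (pullback.fst πX u).base) :
    ∃ y', y ⤳ y' ∧ f.base y' = x := by
  refine exists_specializes_of_comp_eq (fun t ↦ (baseChangeOver_fst_apply f hf u t).symm)
    (range_fst_eq_preimage_range_fst f u hf) (pullback.fst πY u).continuous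
    (pullback.fst πX u).isEmbedding.isInducing H ?_ hyx hx
  rw [Scheme.Pullback.range_fst]
  exact hgen.preimage πX.continuous

lemma IsUniversalHomeomorphism.baseChangeOver (hfu : IsUniversalHomeomorphism f) :
    IsUniversalHomeomorphism (baseChangeOver f hf u) :=
  (MorphismProperty.universally_isStableUnderBaseChange _).of_isPullback
    (isPullback_baseChangeOver f hf u).flip hfu

end BaseChange

section Cover

variable {S X Y : Scheme} {πY : Y ⟶ S} {πX : X ⟶ S} (f : Y ⟶ X) (hf : f ≫ πX = πY)
variable {ι : Type*} {T : ι → Scheme} (u : ∀ i, T i ⟶ S) [∀ i, IsPreimmersion (u i)]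

lemma bijective_of_isHomeomorph_baseChangeOver (hcover : ∀ s, ∃ i, s ∈ Set.range (u i).base)
    (H : ∀ i, IsHomeomorph (baseChangeOver f hf (u i)).base) : Function.Bijective f.base := by
  have hcoverX (x : X) : ∃ i, x ∈ Set.range (pullback.fst πX (u i)).base := by
    simp_rw [Scheme.Pullback.range_fst]
    exact hcover (πX.base x)
  refine ⟨fun y₁ y₂ hy ↦ ?_, fun x ↦ ?_⟩
  · obtain ⟨i, hi⟩ := hcoverX (f.base y₁)
    exact (bijOn_range_fst_of_isHomeomorph_baseChangeOver f hf (u i) (H i)).injOn hi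
      (hy ▸ hi : f.base y₂ ∈ _) hy
  · obtain ⟨i, hi⟩ := hcoverX x
    obtain ⟨y, -, hy⟩ :=
      (bijOn_range_fst_of_isHomeomorph_baseChangeOver f hf (u i) (H i)).surjOn hi
    exact ⟨y, hy⟩

lemma specializingMap_of_isHomeomorph_baseChangeOver
    (hcover : ∀ s, ∃ i, s ∈ Set.range (u i).base)
    (hgen : ∀ i, StableUnderGeneralization (Set.range (u i).base))
    (H : ∀ i, IsHomeomorph (baseChangeOver f hf (u i)).base) : SpecializingMap f.base := by
  intro y x hyx
  obtain ⟨i, hi⟩ := hcover (πX.base x)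
  exact exists_specializes_of_isHomeomorph_baseChangeOver f hf (u i) (H i) (hgen i) hyx
    (by rwa [Scheme.Pullback.range_fst])

lemma isUniversalHomeomorphism_of_baseChangeOver [QuasiCompact f]
    (hcover : ∀ s, ∃ i, s ∈ Set.range (u i).base)
    (hgen : ∀ i, StableUnderGeneralization (Set.range (u i).base))
    (H : ∀ i, IsUniversalHomeomorphism (baseChangeOver f hf (u i))) :
    IsUniversalHomeomorphism f := by
  have key ⦃X' Y' : Scheme⦄ (i₁ : Y' ⟶ Y) (i₂ : X' ⟶ X) (f' : Y' ⟶ X')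
      (sq : IsPullback f' i₁ i₂ f) :
      Function.Bijective f'.base ∧ SpecializingMap f'.base := by
    have hf' : f' ≫ i₂ ≫ πX = i₁ ≫ πY := by rw [sq.w_assoc, hf]
    have H' (i : ι) : IsHomeomorph (baseChangeOver f' hf' (u i)).base :=
      MorphismProperty.universally_le _ _ <|
        (MorphismProperty.universally_isStableUnderBaseChange _).of_isPullback
          (isPullback_baseChangeOver_of_isPullback f hf (u i) sq hf').flip (H i)
    exact ⟨bijective_of_isHomeomorph_baseChangeOver f' hf' u hcover H',
      specializingMap_of_isHomeomorph_baseChangeOver f' hf' u hcover hgen H'⟩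
  have huc : UniversallyClosed f := by
    rw [universallyClosed_eq_universallySpecializing]
    exact ⟨fun _ _ i₁ i₂ f' sq ↦ (key i₁ i₂ f' sq).2, inferInstance⟩
  intro X' Y' i₁ i₂ f' sq
  exact isHomeomorph_iff_continuous_isClosedMap_bijective.mpr
    ⟨f'.continuous, huc.universally_isClosedMap i₁ i₂ f' sq, (key i₁ i₂ f' sq).1⟩

end Cover

lemma Int.isPrime_span_natCast (p : Nat.Primes) : (Ideal.span {((p : ℕ) : ℤ)}).IsPrime :=
  (Ideal.span_singleton_prime (by exact_mod_cast p.2.ne_zero)).mpr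
    (Nat.prime_iff_prime_int.mp p.2)

lemma Int.exists_le_span_natCast (q : Ideal ℤ) [q.IsPrime] :
    ∃ p : Nat.Primes, q ≤ Ideal.span {((p : ℕ) : ℤ)} := by
  by_cases hq : q = ⊥
  · exact ⟨⟨2, Nat.prime_two⟩, by simp [hq]⟩
  · have hgen := Submodule.IsPrincipal.prime_generator_of_isPrime q hq
    refine ⟨⟨_, Int.prime_iff_natAbs_prime.mp hgen⟩, ?_⟩
    rw [Int.span_natAbs, Ideal.span_singleton_generator]

noncomputable def specZLocalization (p : Nat.Primes) : Scheme :=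
  letI := Int.isPrime_span_natCast p
  Spec (.of (Localization.AtPrime (Ideal.span {((p : ℕ) : ℤ)})))

namespace specZLocalization

variable (p : Nat.Primes)

noncomputable def toSpecZ : specZLocalization p ⟶ Spec (.of ℤ) :=
  letI := Int.isPrime_span_natCast p
  Spec.map <| CommRingCat.ofHom <|
    algebraMap ℤ (Localization.AtPrime (Ideal.span {((p : ℕ) : ℤ)}))

instance : IsPreimmersion (toSpecZ p) :=
  letI := Int.isPrime_span_natCast p
  IsPreimmersion.of_isLocalization (Ideal.span {((p : ℕ) : ℤ)}).primeCompl

lemma range_toSpecZ :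
    Set.range (toSpecZ p).base = {s | s.asIdeal ≤ Ideal.span {((p : ℕ) : ℤ)}} := by
  have := Int.isPrime_span_natCast p
  refine (PrimeSpectrum.localization_comap_range (R := ℤ) (Localization.AtPrime _)
    (Ideal.span {((p : ℕ) : ℤ)}).primeCompl).trans ?_
  ext s
  exact Set.disjoint_compl_left_iff_subset

lemma stableUnderGeneralization_range_toSpecZ :
    StableUnderGeneralization (Set.range (toSpecZ p).base) := by
  rw [range_toSpecZ]
  exact fun s t hts (hs : s.asIdeal ≤ _) ↦
    le_trans (α := Ideal ℤ) ((PrimeSpectrum.le_iff_specializes t s).mpr hts) hs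

lemma exists_mem_range_toSpecZ (s : Spec (.of ℤ)) : ∃ p, s ∈ Set.range (toSpecZ p).base := by
  simp_rw [range_toSpecZ]
  exact @Int.exists_le_span_natCast s.asIdeal s.isPrime

end specZLocalization

/-- An affine morphism of schemes `f : Y ⟶ X` is a universal homeomorphism if and only if
for every prime number `p` the base change of `f` along `Spec ℤ_(p) ⟶ Spec ℤ` is a
universal homeomorphism. -/
theorem stmt_11 {X Y : Scheme} (f : Y ⟶ X) (haff : IsAffineHom f) :
    IsUniversalHomeomorphism f ↔
      ∀ (p : ℕ) (hp : p.Prime),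
        letI : (Ideal.span {(p : ℤ)}).IsPrime :=
          (Ideal.span_singleton_prime (by exact_mod_cast hp.ne_zero)).mpr
            (Nat.prime_iff_prime_int.mp hp)
        IsUniversalHomeomorphism
          (pullback.map (specZIsTerminal.from Y)
            (Spec.map (CommRingCat.ofHom
              (algebraMap ℤ (Localization.AtPrime (Ideal.span {(p : ℤ)})))))
            (specZIsTerminal.from X)
            (Spec.map (CommRingCat.ofHom
              (algebraMap ℤ (Localization.AtPrime (Ideal.span {(p : ℤ)})))))
            f (𝟙 _) (𝟙 _) (specZIsTerminal.hom_ext _ _) (by simp)) := by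
  have hf : f ≫ specZIsTerminal.from X = specZIsTerminal.from Y := specZIsTerminal.hom_ext _ _
  open specZLocalization in
  exact ⟨fun hfu p hp ↦ hfu.baseChangeOver f hf (toSpecZ ⟨p, hp⟩),
    fun H ↦ isUniversalHomeomorphism_of_baseChangeOver f hf toSpecZ exists_mem_range_toSpecZ
      stableUnderGeneralization_range_toSpecZ fun p ↦ H p.1 p.2⟩
end

section
/- Let $A$ be a commutative $\mathbb{Q}$-algebra and $A \subseteq B$ a ring extension such that there exists $b \in B$ with $B = A[b]$, $b^2 \in A$, and $b^3 \in A$ (an elementary extension). Then $\operatorname{Spec} B \to \operatorname{Spec} A$ is a universal homeomorphism. -/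
/-!
Integral, surjective and universally injective morphisms are universal homeomorphisms, since all
three properties are stable under base change. `A → B` is integral because `b` is, and surjective
on spectra by lying over. Universal injectivity means that the diagonal is surjective, i.e. that
the kernel of the multiplication `B ⊗[A] B → B` is nil. That kernel is generated by
`1 ⊗ b - b ⊗ 1`, which is nilpotent: `x = 1 ⊗ b` and `y = b ⊗ 1` satisfy `x ^ 2 = y ^ 2` and
`x ^ 3 = y ^ 3` because `b ^ 2, b ^ 3 ∈ A`, and then `(x - y) ^ 3 = 0`.
-/

open AlgebraicGeometry CategoryTheory

open TensorProduct

universe u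

lemma isNilpotent_sub_of_sq_eq_of_cube_eq {T : Type*} [CommRing T] {x y : T}
    (h2 : x ^ 2 = y ^ 2) (h3 : x ^ 3 = y ^ 3) : IsNilpotent (x - y) :=
  ⟨3, by linear_combination (-3 * (x + y)) * h2 + 4 * h3⟩

section Elementary

variable {R S : Type*} [CommRing R] [CommRing S] [Algebra R S]

lemma isNilpotent_one_tmul_sub_tmul_one {b : S} (hb2 : b ^ 2 ∈ Set.range (algebraMap R S))
    (hb3 : b ^ 3 ∈ Set.range (algebraMap R S)) :
    IsNilpotent ((1 : S) ⊗ₜ[R] b - b ⊗ₜ[R] 1) := by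
  have pow_eq : ∀ n, b ^ n ∈ Set.range (algebraMap R S) →
      ((1 : S) ⊗ₜ[R] b) ^ n = (b ⊗ₜ[R] (1 : S)) ^ n := by
    rintro n ⟨r, hr⟩
    rw [Algebra.TensorProduct.tmul_pow, Algebra.TensorProduct.tmul_pow, one_pow, ← hr,
      Algebra.TensorProduct.tmul_one_eq_one_tmul]
  exact isNilpotent_sub_of_sq_eq_of_cube_eq (pow_eq 2 hb2) (pow_eq 3 hb3)

variable (R) in
lemma KaehlerDifferential.ideal_eq_span_of_adjoin_eq_top {s : Set S}
    (hs : Algebra.adjoin R s = ⊤) :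
    KaehlerDifferential.ideal R S = Ideal.span ((fun x ↦ (1 : S) ⊗ₜ[R] x - x ⊗ₜ[R] 1) '' s) := by
  refine le_antisymm ?_ (Ideal.span_le.mpr ?_)
  · set I := Ideal.span ((fun x ↦ (1 : S) ⊗ₜ[R] x - x ⊗ₜ[R] 1) '' s)
    -- the two inclusions `S → S ⊗[R] S ⧸ I` agree on the generators `s`, hence everywhere
    have : (IsScalarTower.toAlgHom R (S ⊗[R] S) (S ⊗[R] S ⧸ I)).comp
          Algebra.TensorProduct.includeRight =
        (IsScalarTower.toAlgHom R (S ⊗[R] S) (S ⊗[R] S ⧸ I)).comp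
          Algebra.TensorProduct.includeLeft := by
      refine AlgHom.ext_of_adjoin_eq_top hs fun x hx ↦ ?_
      simpa [Ideal.Quotient.mk_eq_mk_iff_sub_mem] using Ideal.subset_span (Set.mem_image_of_mem _ hx)
    rw [← KaehlerDifferential.span_range_eq_ideal, Ideal.span_le]
    rintro _ ⟨x, rfl⟩
    simpa [Ideal.Quotient.mk_eq_mk_iff_sub_mem] using AlgHom.congr_fun this x
  · rintro _ ⟨x, -, rfl⟩
    exact KaehlerDifferential.one_smul_sub_smul_one_mem_ideal R x

lemma KaehlerDifferential.ideal_le_nilradical_of_adjoin_singleton_eq_top {b : S}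
    (hadj : Algebra.adjoin R {b} = ⊤) (hb2 : b ^ 2 ∈ Set.range (algebraMap R S))
    (hb3 : b ^ 3 ∈ Set.range (algebraMap R S)) :
    KaehlerDifferential.ideal R S ≤ nilradical (S ⊗[R] S) := by
  rw [KaehlerDifferential.ideal_eq_span_of_adjoin_eq_top R hadj, Set.image_singleton,
    Ideal.span_le, Set.singleton_subset_iff]
  exact mem_nilradical.mpr (isNilpotent_one_tmul_sub_tmul_one hb2 hb3)

lemma Algebra.isIntegral_of_adjoin_singleton_eq_top {b : S} (hadj : Algebra.adjoin R {b} = ⊤)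
    (hb2 : b ^ 2 ∈ Set.range (algebraMap R S)) : Algebra.IsIntegral R S := by
  obtain ⟨r, hr⟩ := hb2
  have hb : IsIntegral R b := .of_pow two_pos (hr ▸ isIntegral_algebraMap)
  exact ⟨fun x ↦ adjoin_le_integralClosure hb (hadj ▸ Algebra.mem_top)⟩

end Elementary

lemma isUniversalHomeomorphism_of_universallyClosed {X Y : Scheme} (f : X ⟶ Y)
    [UniversallyClosed f] [Surjective f] [UniversallyInjective f] :
    IsUniversalHomeomorphism f := by
  intro X' Y' i₁ i₂ f' h
  have : UniversallyClosed f' := MorphismProperty.of_isPullback h.flip ‹_›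
  have : Surjective f' := MorphismProperty.of_isPullback h.flip ‹_›
  have : UniversallyInjective f' := MorphismProperty.of_isPullback h.flip ‹_›
  exact isHomeomorph_iff_continuous_isClosedMap_bijective.mpr
    ⟨f'.continuous, f'.isClosedMap, f'.injective, f'.surjective⟩

section SpecMap

variable {R S : Type u} [CommRing R] [CommRing S] [Algebra R S]

lemma universallyInjective_SpecMap_of_ideal_le_nilradical
    (h : KaehlerDifferential.ideal R S ≤ nilradical (S ⊗[R] S)) :
    UniversallyInjective (Spec.map (CommRingCat.ofHom (algebraMap R S))) := by
  rw [UniversallyInjective.iff_diagonal, diagonal_SpecMap,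
    MorphismProperty.cancel_right_of_respectsIso @Surjective, surjective_iff]
  have hmul : Function.Surjective (Algebra.TensorProduct.lmul' R (S := S)) :=
    fun x ↦ ⟨x ⊗ₜ 1, by simp⟩
  exact (PrimeSpectrum.isHomeomorph_comap _
    (fun x ↦ ⟨1, one_pos, by simpa using hmul x⟩) h).surjective

lemma isUniversalHomeomorphism_SpecMap_of_isIntegral [Algebra.IsIntegral R S] [FaithfulSMul R S]
    (h : KaehlerDifferential.ideal R S ≤ nilradical (S ⊗[R] S)) :
    IsUniversalHomeomorphism (Spec.map (CommRingCat.ofHom (algebraMap R S))) := by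
  have : IsIntegralHom (Spec.map (CommRingCat.ofHom (algebraMap R S))) :=
    IsIntegralHom.SpecMap_iff.mpr (algebraMap_isIntegral_iff.mpr inferInstance)
  have : Surjective (Spec.map (CommRingCat.ofHom (algebraMap R S))) :=
    (surjective_iff _).mpr (Algebra.IsIntegral.comap_surjective R S)
  have := universallyInjective_SpecMap_of_ideal_le_nilradical h
  exact isUniversalHomeomorphism_of_universallyClosed _

end SpecMap

/-- Let `A` be a commutative `ℚ`-algebra and `A ⊆ B` an elementary ring extension,
i.e. there is `b ∈ B` with `B = A[b]`, `b ^ 2 ∈ A` and `b ^ 3 ∈ A`. Then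
`Spec B → Spec A` is a universal homeomorphism. -/
theorem stmt_13 {B : Type} [CommRing B] [Algebra ℚ B] (A : Subalgebra ℚ B)
    (b : B) (hb2 : b ^ 2 ∈ A) (hb3 : b ^ 3 ∈ A)
    (hgen : ∀ x : B, x ∈ Algebra.adjoin ℚ (insert b (A : Set B))) :
    IsUniversalHomeomorphism
      (Spec.map (CommRingCat.ofHom (A.val.toRingHom))) := by
  have hadj : Algebra.adjoin A {b} = ⊤ := by
    have : Algebra.adjoin ℚ (insert b (A : Set B)) ≤ (Algebra.adjoin A {b}).restrictScalars ℚ := by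
      refine Algebra.adjoin_le (Set.insert_subset ?_ fun a ha ↦ ?_) <;>
        rw [SetLike.mem_coe, Subalgebra.mem_restrictScalars]
      exacts [Algebra.self_mem_adjoin_singleton A b,
        (Algebra.adjoin A {b}).algebraMap_mem (⟨a, ha⟩ : A)]
    exact eq_top_iff.mpr fun x _ ↦ this (hgen x)
  have hb2' : b ^ 2 ∈ Set.range (algebraMap A B) := ⟨⟨_, hb2⟩, rfl⟩
  have hb3' : b ^ 3 ∈ Set.range (algebraMap A B) := ⟨⟨_, hb3⟩, rfl⟩
  have := Algebra.isIntegral_of_adjoin_singleton_eq_top hadj hb2'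
  exact isUniversalHomeomorphism_SpecMap_of_isIntegral
    (KaehlerDifferential.ideal_le_nilradical_of_adjoin_singleton_eq_top hadj hb2' hb3')
end

section
/- Let $B$ be a commutative ring, $B' = B \otimes_{\mathbb{Z}} \mathbb{Q}$, and let $A' \to B'$ be a ring map of $\mathbb{Q}$-algebras which is a universal homeomorphism on spectra. Set $A = B \times_{B'} A'$. If $A' \to B'$ is surjective with locally nilpotent kernel, then $A \to B$ is surjective with locally nilpotent kernel; in particular $\operatorname{Spec} B \to \operatorname{Spec} A$ is a universal homeomorphism. -/
/-!
Surjectivity of `A' → B'` lets every `b : B` lift to `(b, a') ∈ A`, and the kernel of `A → B`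
is `0 ×_{B'} ker(A' → B')`, which is nil. For a surjection `A → B` with nil kernel,
`Spec B → Spec A` is a closed immersion which is surjective because every prime contains the
nil kernel; both properties survive base change, and a surjective closed embedding is a
homeomorphism.
-/

open AlgebraicGeometry CategoryTheory

section FiberProduct

variable {A B C : Type*} [Ring A] [Ring B] [Semiring C] (f : B →+* C) (g : A →+* C)

def fiberProductFst :
    RingHom.eqLocus (f.comp (RingHom.fst B A)) (g.comp (RingHom.snd B A)) →+* B :=
  (RingHom.fst B A).comp (RingHom.eqLocus _ _).subtype

theorem fiberProductFst_surjective (hg : Function.Surjective g) :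
    Function.Surjective (fiberProductFst f g) := fun b ↦
  let ⟨a, ha⟩ := hg (f b)
  ⟨⟨(b, a), ha.symm⟩, rfl⟩

theorem isNilpotent_of_mem_ker_fiberProductFst (hg : ∀ a ∈ RingHom.ker g, IsNilpotent a) :
    ∀ x ∈ RingHom.ker (fiberProductFst f g), IsNilpotent x := by
  rintro ⟨⟨b, a⟩, hx⟩ (hb : b = 0)
  subst hb
  have hga : g a = 0 := by simpa using hx.symm
  obtain ⟨n, hn⟩ := hg a hga
  refine ⟨n + 1, Subtype.ext (Prod.ext ?_ ?_)⟩
  · simp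
  · simp [pow_succ, hn]

end FiberProduct

theorem isUniversalHomeomorphism_of_isClosedImmersion_of_surjective {X Y : Scheme}
    (f : X ⟶ Y) [IsClosedImmersion f] [Surjective f] : IsUniversalHomeomorphism f := by
  have : (MorphismProperty.universally (@IsClosedImmersion ⊓ @Surjective)) f := by
    have := MorphismProperty.IsStableUnderBaseChange.inf (P := @IsClosedImmersion)
      (Q := @Surjective)
    rw [MorphismProperty.IsStableUnderBaseChange.universally_eq]
    exact ⟨‹_›, ‹_›⟩
  refine MorphismProperty.universally_mono (fun X Y g ⟨hci, hsurj⟩ ↦ ?_) _ this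
  exact isHomeomorph_iff_isEmbedding_surjective.mpr
    ⟨g.isClosedEmbedding.isEmbedding, hsurj.surj⟩

theorem surjective_spec_map_of_surjective {R S : CommRingCat} (f : R ⟶ S)
    (hf : Function.Surjective f) (hker : ∀ x ∈ RingHom.ker f.hom, IsNilpotent x) :
    Surjective (Spec.map f) :=
  ⟨(PrimeSpectrum.isHomeomorph_comap f.hom (fun x ↦ ⟨1, one_pos, by simpa using hf x⟩)
    hker).surjective⟩

theorem isUniversalHomeomorphism_spec_map_of_surjective {R S : CommRingCat} (f : R ⟶ S)
    (hf : Function.Surjective f) (hker : ∀ x ∈ RingHom.ker f.hom, IsNilpotent x) :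
    IsUniversalHomeomorphism (Spec.map f) :=
  have := IsClosedImmersion.spec_of_surjective f hf
  have := surjective_spec_map_of_surjective f hf hker
  isUniversalHomeomorphism_of_isClosedImmersion_of_surjective _

theorem stmt_14_general {B B' A' : Type} [CommRing B] [CommRing B'] [CommRing A']
    [Algebra B B']
    (π' : A' →+* B') (hsurj : Function.Surjective π')
    (hker : ∀ x ∈ RingHom.ker π', IsNilpotent x) :
    Function.Surjective
      ((RingHom.fst B A').comp
        (RingHom.eqLocus ((algebraMap B B').comp (RingHom.fst B A'))
          (π'.comp (RingHom.snd B A'))).subtype) ∧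
    (∀ x ∈ RingHom.ker ((RingHom.fst B A').comp
        (RingHom.eqLocus ((algebraMap B B').comp (RingHom.fst B A'))
          (π'.comp (RingHom.snd B A'))).subtype), IsNilpotent x) ∧
    IsUniversalHomeomorphism
      (Spec.map (CommRingCat.ofHom
        ((RingHom.fst B A').comp
          (RingHom.eqLocus ((algebraMap B B').comp (RingHom.fst B A'))
            (π'.comp (RingHom.snd B A'))).subtype))) := by
  have hs := fiberProductFst_surjective (algebraMap B B') π' hsurj
  have hk := isNilpotent_of_mem_ker_fiberProductFst (algebraMap B B') π' hker
  exact ⟨hs, hk, isUniversalHomeomorphism_spec_map_of_surjective (CommRingCat.ofHom _) hs hk⟩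

/-- Let `B` be a commutative ring, `B' = B ⊗ ℚ` (realized as the localization of `B` at
the nonzero integers), and `A' → B'` a surjective ring map of `ℚ`-algebras with locally
nilpotent kernel (a universal homeomorphism on spectra). Let `A = B ×_{B'} A'` be the
fiber product. Then `A → B` is surjective with locally nilpotent kernel; in particular
`Spec B → Spec A` is a universal homeomorphism. -/
theorem stmt_14 {B B' A' : Type} [CommRing B] [CommRing B'] [CommRing A']
    [Algebra ℚ B'] [Algebra ℚ A'] [Algebra B B']
    [IsLocalization ((nonZeroDivisors ℤ).map (Int.castRingHom B).toMonoidHom) B']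
    (π' : A' →+* B') (hsurj : Function.Surjective π')
    (hker : ∀ x ∈ RingHom.ker π', IsNilpotent x) :
    Function.Surjective
      ((RingHom.fst B A').comp
        (RingHom.eqLocus ((algebraMap B B').comp (RingHom.fst B A'))
          (π'.comp (RingHom.snd B A'))).subtype) ∧
    (∀ x ∈ RingHom.ker ((RingHom.fst B A').comp
        (RingHom.eqLocus ((algebraMap B B').comp (RingHom.fst B A'))
          (π'.comp (RingHom.snd B A'))).subtype), IsNilpotent x) ∧
    IsUniversalHomeomorphism
      (Spec.map (CommRingCat.ofHom
        ((RingHom.fst B A').comp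
          (RingHom.eqLocus ((algebraMap B B').comp (RingHom.fst B A'))
            (π'.comp (RingHom.snd B A'))).subtype))) :=
  stmt_14_general π' hsurj hker
end

section
/- In the ring $B = \mathbb{Z}_{(p)}[x, y]$, let $A' = \mathbb{Q}[x^2, x^3, x + p y] \subseteq B' = \mathbb{Q}[x, y]$ and $A = B \cap A'$ (intersection inside $B'$). Then $x y^{p-1} + y^p \in A$. -/
open MvPolynomial

/-- In `B' = ℚ[x,y]`, let `A' = ℚ[x², x³, x + p·y]` and let
`B = ℤ_(p)[x,y] ⊆ B'` (polynomials all of whose coefficients lie in `ℤ_(p)`, i.e. have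
denominators prime to `p`). Then `x·y^(p-1) + y^p` lies in `A = B ∩ A'`: it belongs to
`A'` and all of its coefficients lie in `ℤ_(p)`. -/
theorem stmt_15 (p : ℕ) (hp : p.Prime) :
    ((X 0 : MvPolynomial (Fin 2) ℚ) * X 1 ^ (p - 1) + X 1 ^ p) ∈
      Algebra.adjoin ℚ
        {(X 0 : MvPolynomial (Fin 2) ℚ) ^ 2, X 0 ^ 3, X 0 + (p : MvPolynomial (Fin 2) ℚ) * X 1} ∧
    (∀ m : Fin 2 →₀ ℕ, ∃ a b : ℤ, ¬ ((p : ℤ) ∣ b) ∧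
      (coeff m ((X 0 : MvPolynomial (Fin 2) ℚ) * X 1 ^ (p - 1) + X 1 ^ p)) * (b : ℚ) = (a : ℚ)) := by
  have hpQ : (p : ℚ) ≠ 0 := by exact_mod_cast hp.ne_zero
  have hp2 : 2 ≤ p := hp.two_le
  constructor
  · set A := Algebra.adjoin ℚ
      {(X 0 : MvPolynomial (Fin 2) ℚ) ^ 2, X 0 ^ 3, X 0 + (p : MvPolynomial (Fin 2) ℚ) * X 1}
      with hA
    have hx2 : (X 0 : MvPolynomial (Fin 2) ℚ) ^ 2 ∈ A := Algebra.subset_adjoin (by simp)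
    have hx3 : (X 0 : MvPolynomial (Fin 2) ℚ) ^ 3 ∈ A := Algebra.subset_adjoin (by simp)
    have hxy : (X 0 + (p : MvPolynomial (Fin 2) ℚ) * X 1) ∈ A := Algebra.subset_adjoin (by simp)
    -- all powers X0^n with n ≥ 2 lie in A
    have hxn : ∀ n, 2 ≤ n → (X 0 : MvPolynomial (Fin 2) ℚ) ^ n ∈ A := by
      intro n hn
      induction n using Nat.strong_induction_on with
      | _ n ih =>
        match n, hn with
        | 2, _ => exact hx2
        | 3, _ => exact hx3
        | (m + 4), _ =>
          have h : (X 0 : MvPolynomial (Fin 2) ℚ) ^ (m + 4) = X 0 ^ 2 * X 0 ^ (m + 2) := by ring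
          rw [h]
          exact A.mul_mem hx2 (ih (m + 2) (by omega) (by omega))
    -- all monomials X0^k * X1^m with k ≥ 2 lie in A
    have key : ∀ m k, 2 ≤ k → (X 0 : MvPolynomial (Fin 2) ℚ) ^ k * X 1 ^ m ∈ A := by
      intro m
      induction m with
      | zero => intro k hk; simpa using hxn k hk
      | succ m ih =>
        intro k hk
        have h1 : (X 0 : MvPolynomial (Fin 2) ℚ) ^ k * X 1 ^ m * (X 0 + (p : MvPolynomial (Fin 2) ℚ) * X 1)
            - X 0 ^ (k + 1) * X 1 ^ m = (p : MvPolynomial (Fin 2) ℚ) * (X 0 ^ k * X 1 ^ (m + 1)) := by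
          ring
        have h2 : (X 0 : MvPolynomial (Fin 2) ℚ) ^ k * X 1 ^ (m + 1) =
            ((p : ℚ))⁻¹ • ((X 0 : MvPolynomial (Fin 2) ℚ) ^ k * X 1 ^ m *
              (X 0 + (p : MvPolynomial (Fin 2) ℚ) * X 1) - X 0 ^ (k + 1) * X 1 ^ m) := by
          rw [h1, smul_eq_C_mul, ← map_natCast (C : ℚ →+* MvPolynomial (Fin 2) ℚ) p,
            ← mul_assoc, ← C_mul, inv_mul_cancel₀ hpQ, C_1, one_mul]
        rw [h2]
        exact A.smul_mem (A.sub_mem (A.mul_mem (ih k hk) hxy) (ih (k + 1) (by omega))) _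
    -- the binomial identity
    have hpred : p - 1 + 1 = p := Nat.succ_pred_eq_of_pos hp.pos
    have hbin : (X 0 + (p : MvPolynomial (Fin 2) ℚ) * X 1) ^ p -
        ∑ k ∈ Finset.Ico 2 (p + 1),
          (X 0 : MvPolynomial (Fin 2) ℚ) ^ k * ((p : MvPolynomial (Fin 2) ℚ) * X 1) ^ (p - k) *
            (p.choose k : MvPolynomial (Fin 2) ℚ)
        = C ((p : ℚ) ^ p) * ((X 0 : MvPolynomial (Fin 2) ℚ) * X 1 ^ (p - 1) + X 1 ^ p) := by
      rw [add_pow, Finset.range_eq_Ico,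
        Finset.sum_eq_sum_Ico_succ_bot (by omega : 0 < p + 1),
        Finset.sum_eq_sum_Ico_succ_bot (by omega : 1 < p + 1)]
      have e0 : (X 0 : MvPolynomial (Fin 2) ℚ) ^ 0 * ((p : MvPolynomial (Fin 2) ℚ) * X 1) ^ (p - 0) *
          (p.choose 0 : MvPolynomial (Fin 2) ℚ) = (p : MvPolynomial (Fin 2) ℚ) ^ p * X 1 ^ p := by
        simp [mul_pow]
      have e1 : (X 0 : MvPolynomial (Fin 2) ℚ) ^ 1 * ((p : MvPolynomial (Fin 2) ℚ) * X 1) ^ (p - 1) *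
          (p.choose 1 : MvPolynomial (Fin 2) ℚ) =
          (p : MvPolynomial (Fin 2) ℚ) ^ p * (X 0 * X 1 ^ (p - 1)) := by
        rw [Nat.choose_one_right, mul_pow, pow_one]
        rw [show (p : MvPolynomial (Fin 2) ℚ) ^ p = (p : MvPolynomial (Fin 2) ℚ) ^ (p - 1) *
          (p : MvPolynomial (Fin 2) ℚ) from by rw [← pow_succ, hpred]]
        ring
      rw [e0, e1]
      have hC : C ((p : ℚ) ^ p) = (p : MvPolynomial (Fin 2) ℚ) ^ p := by
        rw [← map_natCast (C : ℚ →+* MvPolynomial (Fin 2) ℚ) p, ← C_pow]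
      rw [hC]
      ring
    -- the sum over k ≥ 2 lies in A
    have hS : (∑ k ∈ Finset.Ico 2 (p + 1),
        (X 0 : MvPolynomial (Fin 2) ℚ) ^ k * ((p : MvPolynomial (Fin 2) ℚ) * X 1) ^ (p - k) *
          (p.choose k : MvPolynomial (Fin 2) ℚ)) ∈ A := by
      refine A.sum_mem fun k hk => ?_
      have hk2 : 2 ≤ k := (Finset.mem_Ico.mp hk).1
      have : (X 0 : MvPolynomial (Fin 2) ℚ) ^ k * ((p : MvPolynomial (Fin 2) ℚ) * X 1) ^ (p - k) *
          (p.choose k : MvPolynomial (Fin 2) ℚ) =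
          (p : MvPolynomial (Fin 2) ℚ) ^ (p - k) * (p.choose k : MvPolynomial (Fin 2) ℚ) *
            (X 0 ^ k * X 1 ^ (p - k)) := by
        rw [mul_pow]; ring
      rw [this]
      exact A.mul_mem (A.mul_mem (A.pow_mem (A.natCast_mem p) _) (A.natCast_mem _))
        (key (p - k) k hk2)
    -- conclude
    have hfin : ((X 0 : MvPolynomial (Fin 2) ℚ) * X 1 ^ (p - 1) + X 1 ^ p) =
        ((p : ℚ) ^ p)⁻¹ • ((X 0 + (p : MvPolynomial (Fin 2) ℚ) * X 1) ^ p -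
          ∑ k ∈ Finset.Ico 2 (p + 1),
            (X 0 : MvPolynomial (Fin 2) ℚ) ^ k * ((p : MvPolynomial (Fin 2) ℚ) * X 1) ^ (p - k) *
              (p.choose k : MvPolynomial (Fin 2) ℚ)) := by
      rw [hbin, smul_eq_C_mul, ← mul_assoc, ← C_mul,
        inv_mul_cancel₀ (pow_ne_zero _ hpQ), C_1, one_mul]
    rw [hfin]
    exact A.smul_mem (A.sub_mem (A.pow_mem hxy p) hS) _
  · intro m
    refine ⟨coeff m ((X 0 : MvPolynomial (Fin 2) ℤ) * X 1 ^ (p - 1) + X 1 ^ p), 1, ?_, ?_⟩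
    · intro h
      have := Int.le_of_dvd one_pos h
      omega
    · have hmap : ((X 0 : MvPolynomial (Fin 2) ℚ) * X 1 ^ (p - 1) + X 1 ^ p) =
          map (Int.castRingHom ℚ) ((X 0 : MvPolynomial (Fin 2) ℤ) * X 1 ^ (p - 1) + X 1 ^ p) := by
        simp
      rw [hmap, coeff_map]
      simp
end

section
/- Let $C = \mathbb{C}[t]$, $B = \mathbb{C}[t][x,y]$, $B' = \mathbb{C}(t)[x,y]$, $A' = \mathbb{C}(t)[x^2, x^3, x + t y] \subseteq B'$, and $A = B \times_{B'} A' = B \cap A'$. Then the quotient $A/(xB \cap A)$ is isomorphic to $\mathbb{C}[t][t y, t y^2, \ldots, t y^k, \ldots]$, which is not a finitely generated $\mathbb{C}[t]$-algebra; hence $A$ is not a finitely generated $\mathbb{C}[t]$-algebra. -/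
/-!
Let `φ : R[x, y] → R[y]` be reduction modulo `x`. Every `f ∈ A'` satisfies
`t • φ (∂f/∂x) = d/dy (φ f)`: this condition is closed under products by the Leibniz rule and
holds for `x²`, `x³` and `x + t y`. As `k + 1` is a unit in `ℂ[t]`, every non-constant
coefficient of `φ a`, `a ∈ A`, is therefore divisible by `t`, so `φ (A) ⊆ T`. Conversely
`t yᵏ⁺¹ + (k + 1) x yᵏ ∈ A'` (induction on `k`, dividing by `t` in `ℂ(t)`), so `φ` maps `A`
onto `T`, with kernel `xB ∩ A`.

`T` is not finitely generated: if its generators have degree at most `N`, every element they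
generate has its coefficients beyond degree `N` divisible by `t²`, which `t yᴺ⁺¹` does not.
Since `A` surjects onto `T`, `A` is not finitely generated either.
-/
set_option synthInstance.maxHeartbeats 1000000
set_option maxHeartbeats 1000000

open MvPolynomial

/-- The ring `ℂ[t]`. -/
noncomputable def Rc : Type := Polynomial ℂ

noncomputable instance : CommRing Rc := inferInstanceAs (CommRing (Polynomial ℂ))
noncomputable instance : IsDomain Rc := inferInstanceAs (IsDomain (Polynomial ℂ))

/-- The element `t ∈ ℂ[t]`. -/
noncomputable def tRc : Rc := (Polynomial.X : Polynomial ℂ)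

/-- The field `ℂ(t)` of rational functions. -/
noncomputable def Kt : Type := FractionRing Rc

noncomputable instance : Field Kt := inferInstanceAs (Field (FractionRing Rc))
noncomputable instance : Algebra Rc Kt := inferInstanceAs (Algebra Rc (FractionRing Rc))

/-- The element `t ∈ ℂ(t)`. -/
noncomputable def tK : Kt := algebraMap Rc Kt tRc

/-- The ring `B = ℂ[t][x,y]`. -/
abbrev Bc : Type := MvPolynomial (Fin 2) Rc

/-- The ring `B' = ℂ(t)[x,y]`. -/
abbrev Bt : Type := MvPolynomial (Fin 2) Kt

/-- The inclusion `B = ℂ[t][x,y] → B' = ℂ(t)[x,y]`. -/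
noncomputable def iB : Bc →ₐ[Rc] Bt :=
  MvPolynomial.mapAlgHom (Algebra.ofId Rc Kt)

open scoped Polynomial

section CoeffDvd

variable {R : Type*} [CommRing R]

def coeffDvdSubalgebra (t : R) : Subalgebra R R[X] where
  carrier := {p | ∀ j, t ∣ p.coeff (j + 1)}
  add_mem' ha hb j := by
    rw [Polynomial.coeff_add]
    exact dvd_add (ha j) (hb j)
  mul_mem' {p q} hp hq j := by
    rw [Polynomial.coeff_mul]
    refine Finset.dvd_sum fun ⟨u, v⟩ huv => ?_
    rw [Finset.HasAntidiagonal.mem_antidiagonal] at huv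
    cases u with
    | zero => exact (show v = j + 1 by omega) ▸ (hq j).mul_left _
    | succ u => exact (hp u).mul_right _
  algebraMap_mem' r j := by simp

theorem adjoin_C_mul_X_pow_succ_eq (t : R) :
    Algebra.adjoin R (Set.range fun k : ℕ => Polynomial.C t * Polynomial.X ^ (k + 1)) =
      coeffDvdSubalgebra t := by
  apply le_antisymm
  · refine Algebra.adjoin_le ?_
    rintro _ ⟨k, rfl⟩ j
    rw [Polynomial.coeff_C_mul, Polynomial.coeff_X_pow]
    split_ifs <;> simp
  · intro p hp
    rw [p.as_sum_range_C_mul_X_pow]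
    refine Subalgebra.sum_mem _ fun i _ => ?_
    cases i with
    | zero =>
      simpa using Subalgebra.algebraMap_mem (Algebra.adjoin R _ : Subalgebra R R[X]) (p.coeff 0)
    | succ j =>
      obtain ⟨q, hq⟩ := hp j
      rw [hq, map_mul, mul_comm (Polynomial.C t), mul_assoc]
      exact Subalgebra.mul_mem _ (Subalgebra.algebraMap_mem _ q) (Algebra.subset_adjoin ⟨j, rfl⟩)

/-- Contains the elements of `coeffDvdSubalgebra t` of degree at most `N`, but not
`t X ^ (N + 1)` unless `t ^ 2 ∣ t`. -/
def coeffDvdSubalgebraTrunc (t : R) (N : ℕ) : Subalgebra R R[X] where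
  carrier := {p | p ∈ coeffDvdSubalgebra t ∧ ∀ j, N < j → t ^ 2 ∣ p.coeff j}
  add_mem' ha hb := ⟨add_mem ha.1 hb.1, fun j hj => by
    rw [Polynomial.coeff_add]
    exact dvd_add (ha.2 j hj) (hb.2 j hj)⟩
  mul_mem' {p q} hp hq := ⟨mul_mem hp.1 hq.1, fun j hj => by
    rw [Polynomial.coeff_mul]
    refine Finset.dvd_sum fun ⟨u, v⟩ huv => ?_
    rw [Finset.HasAntidiagonal.mem_antidiagonal] at huv
    match u, v with
    | 0, v => exact (show v = j by omega) ▸ (hq.2 j hj).mul_left _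
    | u + 1, 0 => exact (show u + 1 = j by omega) ▸ (hp.2 j hj).mul_right _
    | u + 1, v + 1 => exact pow_two t ▸ mul_dvd_mul (hp.1 u) (hq.1 v)⟩
  algebraMap_mem' r :=
    ⟨Subalgebra.algebraMap_mem _ r, fun j hj => by simp [Polynomial.coeff_C, Nat.ne_zero_of_lt hj]⟩

theorem not_fg_coeffDvdSubalgebra {t : R} (ht : ¬ t ^ 2 ∣ t) : ¬ (coeffDvdSubalgebra t).FG := by
  rintro ⟨s, hs⟩
  set N := s.sup Polynomial.natDegree
  have hle : coeffDvdSubalgebra t ≤ coeffDvdSubalgebraTrunc t N := by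
    refine hs ▸ Algebra.adjoin_le fun p hp => ⟨hs ▸ Algebra.subset_adjoin hp, fun j hj => ?_⟩
    rw [Polynomial.coeff_eq_zero_of_natDegree_lt (lt_of_le_of_lt (Finset.le_sup hp) hj)]
    exact dvd_zero _
  have hmem : Polynomial.C t * Polynomial.X ^ (N + 1) ∈ coeffDvdSubalgebra t :=
    adjoin_C_mul_X_pow_succ_eq t ▸ Algebra.subset_adjoin ⟨N, rfl⟩
  exact ht (by simpa using (hle hmem).2 (N + 1) N.lt_succ_self)

end CoeffDvd

section YAxis

variable {R : Type*} [CommRing R]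

noncomputable def cuspShearAlgebra (c : R) : Subalgebra R (MvPolynomial (Fin 2) R) :=
  Algebra.adjoin R {X 0 ^ 2, X 0 ^ 3, X 0 + C c * X 1}

variable (R) in
/-- Reduction modulo `x = X 0`, identifying `R[x, y] / (x)` with `R[y]`. -/
noncomputable def restrictYAxis : MvPolynomial (Fin 2) R →ₐ[R] R[X] :=
  aeval ![0, Polynomial.X]

@[simp] theorem restrictYAxis_X_zero : restrictYAxis R (X 0) = 0 := by simp [restrictYAxis]

@[simp] theorem restrictYAxis_X_one : restrictYAxis R (X 1) = Polynomial.X := by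
  simp [restrictYAxis]

theorem restrictYAxis_map {S : Type*} [CommRing S] (f : R →+* S) (p : MvPolynomial (Fin 2) R) :
    restrictYAxis S (map f p) = (restrictYAxis R p).map f := by
  induction p using MvPolynomial.induction_on with
  | C r => simp
  | add p q hp hq => simp [hp, hq]
  | mul_X p i hp => fin_cases i <;> simp [hp]

theorem restrictYAxis_eq_zero_iff {p : MvPolynomial (Fin 2) R} :
    restrictYAxis R p = 0 ↔ p ∈ Ideal.span {X 0} := by
  constructor
  · intro hp
    have hid : (Ideal.Quotient.mkₐ R (Ideal.span {X 0})).comp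
        ((Polynomial.aeval (X 1)).comp (restrictYAxis R)) = Ideal.Quotient.mkₐ R _ := by
      ext i
      fin_cases i <;> simp
    rw [← Ideal.Quotient.eq_zero_iff_mem, ← Ideal.Quotient.mkₐ_eq_mk R, ← hid]
    simp [hp]
  · intro hp
    obtain ⟨q, rfl⟩ := Ideal.mem_span_singleton'.mp hp
    simp

/-- Polynomials whose derivative in the direction `(c, -1)` vanishes along the line `x = 0`. -/
noncomputable def dirDerivZeroOnYAxis (c : R) : Subalgebra R (MvPolynomial (Fin 2) R) where
  carrier := {f | Polynomial.C c * restrictYAxis R (pderiv 0 f) =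
    Polynomial.derivative (restrictYAxis R f)}
  add_mem' {f g} hf hg := by
    simp only [Set.mem_ofPred_eq, map_add, mul_add] at *
    rw [hf, hg]
  mul_mem' {f g} hf hg := by
    simp only [Set.mem_ofPred_eq, pderiv_mul, map_add, map_mul, Polynomial.derivative_mul] at *
    rw [← hf, ← hg]
    ring
  algebraMap_mem' r := by simp [MvPolynomial.algebraMap_eq]

theorem mem_dirDerivZeroOnYAxis {c : R} {f : MvPolynomial (Fin 2) R} :
    f ∈ dirDerivZeroOnYAxis c ↔
      Polynomial.C c * restrictYAxis R (pderiv 0 f) = Polynomial.derivative (restrictYAxis R f) :=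
  Iff.rfl

theorem cuspShearAlgebra_le_dirDerivZeroOnYAxis (c : R) :
    cuspShearAlgebra c ≤ dirDerivZeroOnYAxis c := by
  refine Algebra.adjoin_le ?_
  rintro f (rfl | rfl | rfl) <;> simp [mem_dirDerivZeroOnYAxis, pderiv_X]

theorem mem_dirDerivZeroOnYAxis_of_map {S : Type*} [CommRing S] {f : R →+* S}
    (hf : Function.Injective f) {c : R} {p : MvPolynomial (Fin 2) R}
    (hp : map f p ∈ dirDerivZeroOnYAxis (f c)) : p ∈ dirDerivZeroOnYAxis c := by
  rw [mem_dirDerivZeroOnYAxis, pderiv_map, restrictYAxis_map, restrictYAxis_map,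
    Polynomial.derivative_map, ← Polynomial.map_C, ← Polynomial.map_mul] at hp
  exact Polynomial.map_injective f hf hp

theorem restrictYAxis_mem_coeffDvdSubalgebra [Algebra ℚ R] {c : R} {p : MvPolynomial (Fin 2) R}
    (hp : p ∈ dirDerivZeroOnYAxis c) : restrictYAxis R p ∈ coeffDvdSubalgebra c := by
  intro j
  have hj := congrArg (Polynomial.coeff · j) hp
  simp only [Polynomial.coeff_C_mul, Polynomial.coeff_derivative] at hj
  have hunit : IsUnit ((j : R) + 1) := by
    simpa using (isUnit_iff_ne_zero.mpr (j.cast_add_one_ne_zero : (j : ℚ) + 1 ≠ 0)).map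
      (algebraMap ℚ R)
  exact hunit.dvd_mul_right.mp ⟨_, hj.symm⟩

end YAxis

section Field

variable {K : Type*} [Field K] {c : K}

theorem mem_of_C_mul_mem {σ : Type*} {S : Subalgebra K (MvPolynomial σ K)} (hc : c ≠ 0)
    {f : MvPolynomial σ K} (hf : C c * f ∈ S) : f ∈ S := by
  rw [C_mul'] at hf
  exact (Submodule.smul_mem_iff (Subalgebra.toSubmodule S) hc).mp hf

theorem X_zero_sq_and_cube_mul_X_one_pow_mem (hc : c ≠ 0) (m : ℕ) :
    (X 0 : MvPolynomial (Fin 2) K) ^ 2 * X 1 ^ m ∈ cuspShearAlgebra c ∧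
      X 0 ^ 3 * X 1 ^ m ∈ cuspShearAlgebra c := by
  have hx2 : X 0 ^ 2 ∈ cuspShearAlgebra c := Algebra.subset_adjoin (by simp)
  have hx3 : X 0 ^ 3 ∈ cuspShearAlgebra c := Algebra.subset_adjoin (by simp)
  have hs : X 0 + C c * X 1 ∈ cuspShearAlgebra c := Algebra.subset_adjoin (by simp)
  induction m with
  | zero => simpa using ⟨hx2, hx3⟩
  | succ m ih =>
    constructor <;> apply mem_of_C_mul_mem hc
    · have h : C c * ((X 0 : MvPolynomial (Fin 2) K) ^ 2 * X 1 ^ (m + 1)) =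
          X 0 ^ 2 * X 1 ^ m * (X 0 + C c * X 1) - X 0 ^ 3 * X 1 ^ m := by ring
      rw [h]
      exact sub_mem (mul_mem ih.1 hs) ih.2
    · have h : C c * ((X 0 : MvPolynomial (Fin 2) K) ^ 3 * X 1 ^ (m + 1)) =
          X 0 ^ 3 * X 1 ^ m * (X 0 + C c * X 1) - X 0 ^ 2 * (X 0 ^ 2 * X 1 ^ m) := by ring
      rw [h]
      exact sub_mem (mul_mem ih.2 hs) (mul_mem hx2 ih.1)

theorem C_mul_X_one_pow_succ_add_mem (hc : c ≠ 0) (k : ℕ) :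
    C c * X 1 ^ (k + 1) + (k + 1 : MvPolynomial (Fin 2) K) * X 0 * X 1 ^ k ∈
      cuspShearAlgebra c := by
  have hs : X 0 + C c * X 1 ∈ cuspShearAlgebra c := Algebra.subset_adjoin (by simp)
  induction k with
  | zero => simpa [add_comm] using hs
  | succ k ih =>
    apply mem_of_C_mul_mem hc
    have hk : ((k + 1 : ℕ) : MvPolynomial (Fin 2) K) ∈ cuspShearAlgebra c := natCast_mem _ _
    have hx2 := (X_zero_sq_and_cube_mul_X_one_pow_mem hc k).1
    convert sub_mem (mul_mem hs ih) (mul_mem hk hx2) using 1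
    push_cast
    ring

end Field

noncomputable instance : Algebra ℚ Rc := inferInstanceAs (Algebra ℚ (Polynomial ℂ))

theorem algebraMap_Rc_Kt_injective : Function.Injective (algebraMap Rc Kt) :=
  IsFractionRing.injective Rc (FractionRing Rc)

theorem tK_ne_zero : tK ≠ 0 :=
  (map_ne_zero_iff _ algebraMap_Rc_Kt_injective).mpr Polynomial.X_ne_zero

theorem not_tRc_sq_dvd : ¬ tRc ^ 2 ∣ tRc := fun h =>
  absurd ((pow_dvd_pow_iff (n := 2) (m := 1) (Polynomial.X_ne_zero : tRc ≠ 0)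
    Polynomial.not_isUnit_X).mp (by rwa [pow_one])) (by norm_num)

theorem restrictYAxis_mem_of_iB_mem {a : Bc} (ha : iB a ∈ cuspShearAlgebra tK) :
    restrictYAxis Rc a ∈ coeffDvdSubalgebra tRc :=
  restrictYAxis_mem_coeffDvdSubalgebra <| mem_dirDerivZeroOnYAxis_of_map
    algebraMap_Rc_Kt_injective (cuspShearAlgebra_le_dirDerivZeroOnYAxis tK ha)

theorem exists_iB_mem_restrictYAxis_eq (k : ℕ) : ∃ a : Bc, iB a ∈ cuspShearAlgebra tK ∧
    restrictYAxis Rc a = Polynomial.C tRc * Polynomial.X ^ (k + 1) :=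
  ⟨C tRc * X 1 ^ (k + 1) + (k + 1 : Bc) * X 0 * X 1 ^ k,
    by simpa [iB, tK] using C_mul_X_one_pow_succ_add_mem tK_ne_zero k, by simp⟩

/-- With `B = ℂ[t][x,y]`, `B' = ℂ(t)[x,y]`, `A' = ℂ(t)[x², x³, x + t·y] ⊆ B'` and
`A = B ∩ A'` (the fiber product `B ×_{B'} A'`), the quotient `A/(xB ∩ A)` is isomorphic
as a `ℂ[t]`-algebra to `ℂ[t][t·y, t·y², …, t·yᵏ, …]`, which is not a finitely generated
`ℂ[t]`-algebra; hence `A` is not a finitely generated `ℂ[t]`-algebra. -/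
theorem stmt_16 (A' : Subalgebra Kt Bt)
    (hA' : A' = Algebra.adjoin Kt {(X 0 : Bt) ^ 2, (X 0 : Bt) ^ 3, (X 0 : Bt) + C tK * X 1})
    (A : Subalgebra Rc Bc)
    (hA : A = Subalgebra.comap iB (A'.restrictScalars Rc))
    (I : Ideal ↥A)
    (hI : I = Ideal.comap A.val.toRingHom (Ideal.span {(X 0 : Bc)}))
    (T : Subalgebra Rc (Polynomial Rc))
    (hT : T = Algebra.adjoin Rc
      (Set.range fun k : ℕ => Polynomial.C tRc * Polynomial.X ^ (k + 1))) :
    Nonempty ((↥A ⧸ I) ≃ₐ[Rc] ↥T) ∧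
    ¬ Algebra.FiniteType Rc ↥T ∧
    ¬ Algebra.FiniteType Rc ↥A := by
  subst hA' hA hI hT
  rw [adjoin_C_mul_X_pow_succ_eq]
  set A := Subalgebra.comap iB ((cuspShearAlgebra tK).restrictScalars Rc)
  let f : A →ₐ[Rc] coeffDvdSubalgebra tRc :=
    ((restrictYAxis Rc).comp A.val).codRestrict _ fun a => restrictYAxis_mem_of_iB_mem a.2
  have hrange : coeffDvdSubalgebra tRc ≤ ((restrictYAxis Rc).comp A.val).range := by
    rw [← adjoin_C_mul_X_pow_succ_eq]
    refine Algebra.adjoin_le ?_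
    rintro _ ⟨k, rfl⟩
    obtain ⟨a, ha, hak⟩ := exists_iB_mem_restrictYAxis_eq k
    exact ⟨⟨a, ha⟩, hak⟩
  have hf : Function.Surjective f := fun p =>
    let ⟨a, ha⟩ := hrange p.2
    ⟨a, Subtype.ext ha⟩
  have hker : RingHom.ker f = Ideal.comap A.val.toRingHom (Ideal.span {X 0}) := by
    ext a
    rw [RingHom.mem_ker, Ideal.mem_comap, ← restrictYAxis_eq_zero_iff, ← Subtype.val_inj]
    rfl
  have hT : ¬ Algebra.FiniteType Rc (coeffDvdSubalgebra tRc) := fun h =>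
    not_fg_coeffDvdSubalgebra not_tRc_sq_dvd ((Subalgebra.fg_top _).mp h.out)
  exact ⟨⟨hker ▸ Ideal.quotientKerAlgEquivOfSurjective hf⟩, hT, fun h => hT (h.of_surjective f hf)⟩
end
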